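/- arXiv:1002.4649 — 4 statements merged into one kernel-verified Lean document; each statement's English description precedes it below -/
import Mathlib

section
/- Let β > 0, let {m_n} be a sequence of positive integers with m_n/n → β, and let Q, Q_1, Q_2, … be probability measures on {0,1,2,…} with Q_n supported on {0,1,…,m_n}, such that Q_n(t) → Q(t) for every t ≥ 0 and Σ_{t≥1} t·Q_n(t) → Σ_{t≥1} t·Q(t) < ∞ as n → ∞. Assume Q(0) = 1. Then N_1(G(n, m_n, Q_n)) = o_P(n), i.e., for every ε > 0, P(N_1(G(n, m_n, Q_n)) ≥ ε n) → 0 as n → ∞. -/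
/-!
Since `Qₙ(0) → Q(0) = 1`, a vertex receives a nonempty attribute set only with probability
`1 - Qₙ(0) → 0`. Vertices with empty sets are isolated, so `N₁ ≤ max 1 X`, where `X` counts the
vertices with nonempty sets; as soon as `εn > 1`, Markov's inequality gives
`P(N₁ ≥ εn) ≤ E X / (εn) = (1 - Qₙ(0)) / ε → 0`.
-/

open Filter MeasureTheory
open scoped ENNReal

/-- The random intersection graph determined by attribute sets `S i`: vertices `i ≠ j`
are adjacent iff `S i ∩ S j ≠ ∅`. -/
def interGraph {n m : ℕ} (S : Fin n → Finset (Fin m)) : SimpleGraph (Fin n) where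
  Adj i j := i ≠ j ∧ (S i ∩ S j).Nonempty
  symm := by
    constructor
    intro i j hij
    exact ⟨hij.1.symm, by rw [Finset.inter_comm]; exact hij.2⟩
  loopless := by
    constructor
    intro i hi
    exact hi.1 rfl

/-- `N₁ G`: the number of vertices in a largest connected component of `G`. -/
noncomputable def largestComponentOrder {V : Type*} [Fintype V] (G : SimpleGraph V) : ℕ := by
  classical
  exact Finset.univ.sup fun v => (Finset.univ.filter fun u => G.Reachable u v).card

lemma SimpleGraph.Reachable.eq_of_forall_not_adj {V : Type*} {G : SimpleGraph V} {u v : V}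
    (h : G.Reachable u v) (hu : ∀ w, ¬G.Adj u w) : u = v := by
  obtain ⟨p⟩ := h
  cases p with
  | nil => rfl
  | cons hadj _ => exact absurd hadj (hu _)

/-- Outside `s` all vertices are isolated, so every component is a singleton or lies in `s`. -/
lemma largestComponentOrder_le_max_one_card {V : Type*} [Fintype V] (G : SimpleGraph V)
    (s : Finset V) (hs : ∀ v ∉ s, ∀ w, ¬G.Adj v w) :
    largestComponentOrder G ≤ max 1 s.card := by
  classical
  refine Finset.sup_le fun v _ => ?_
  by_cases hv : v ∈ s
  · refine le_max_of_le_right (Finset.card_le_card fun u hu => ?_)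
    have hreach : G.Reachable u v := (Finset.mem_filter.1 hu).2
    by_contra hus
    exact hus (hreach.eq_of_forall_not_adj (hs u hus) ▸ hv)
  · refine le_max_of_le_left (Finset.card_le_one.2 fun a ha b hb => ?_)
    have hva := (Finset.mem_filter.1 ha).2.symm.eq_of_forall_not_adj (hs v hv)
    have hvb := (Finset.mem_filter.1 hb).2.symm.eq_of_forall_not_adj (hs v hv)
    rw [← hva, ← hvb]

lemma largestComponentOrder_interGraph_le {n m : ℕ} (S : Fin n → Finset (Fin m)) :
    largestComponentOrder (interGraph S) ≤
      max 1 (Finset.univ.filter fun i => (S i).Nonempty).card := by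
  refine largestComponentOrder_le_max_one_card _ _ fun i hi j hij => hi ?_
  exact Finset.mem_filter.2 ⟨Finset.mem_univ i, hij.2.mono Finset.inter_subset_left⟩

lemma mul_measure_le_card_filter_mem_le_sum {Ω ι : Type*} [MeasurableSpace Ω] [Fintype ι]
    (μ : Measure Ω) (E : ι → Set Ω) [∀ ω, DecidablePred fun i => ω ∈ E i]
    (hE : ∀ i, MeasurableSet (E i)) (c : ℝ≥0∞) :
    c * μ {ω | c ≤ (Finset.univ.filter fun i => ω ∈ E i).card} ≤ ∑ i, μ (E i) := by
  have hcount : ∀ ω, ((Finset.univ.filter fun i => ω ∈ E i).card : ℝ≥0∞) =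
      ∑ i, (E i).indicator 1 ω := by
    intro ω
    simp only [Set.indicator_apply, Pi.one_apply, Finset.sum_boole]
  have hmeas : Measurable fun ω => ∑ i, (E i).indicator (1 : Ω → ℝ≥0∞) ω :=
    Finset.measurable_sum _ fun i _ => measurable_one.indicator (hE i)
  calc c * μ {ω | c ≤ (Finset.univ.filter fun i => ω ∈ E i).card}
      = c * μ {ω | c ≤ ∑ i, (E i).indicator 1 ω} := by simp only [hcount]
    _ ≤ ∫⁻ ω, ∑ i, (E i).indicator 1 ω ∂μ := mul_meas_ge_le_lintegral₀ hmeas.aemeasurable c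
    _ = ∑ i, μ (E i) := by
      rw [lintegral_finsetSum _ fun i _ => measurable_one.indicator (hE i)]
      simp only [lintegral_indicator_one (hE _)]

lemma mul_measure_largestComponentOrder_ge_le_sum {Ω : Type*} [MeasurableSpace Ω] {n m : ℕ}
    (μ : Measure Ω) (S : Fin n → Ω → Finset (Fin m))
    (hS : ∀ i, MeasurableSet {ω | (S i ω).Nonempty}) {x : ℝ} (hx : 1 < x) :
    ENNReal.ofReal x * μ {ω | x ≤ (largestComponentOrder (interGraph fun i => S i ω) : ℝ)} ≤
      ∑ i, μ {ω | (S i ω).Nonempty} := by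
  have hsub : {ω | x ≤ (largestComponentOrder (interGraph fun i => S i ω) : ℝ)} ⊆
      {ω | ENNReal.ofReal x ≤ (Finset.univ.filter fun i => (S i ω).Nonempty).card} := by
    intro ω hω
    have hle : x ≤ max 1 ((Finset.univ.filter fun i => (S i ω).Nonempty).card : ℝ) :=
      le_trans hω (by exact_mod_cast largestComponentOrder_interGraph_le _)
    rw [Set.mem_ofPred_eq, ← ENNReal.ofReal_natCast]
    exact ENNReal.ofReal_le_ofReal ((le_max_iff.1 hle).resolve_left hx.not_ge)
  calc ENNReal.ofReal x * μ {ω | x ≤ (largestComponentOrder (interGraph fun i => S i ω) : ℝ)}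
      ≤ ENNReal.ofReal x *
          μ {ω | ENNReal.ofReal x ≤ (Finset.univ.filter fun i => (S i ω).Nonempty).card} := by
        gcongr
    _ ≤ ∑ i, μ {ω | (S i ω).Nonempty} :=
        mul_measure_le_card_filter_mem_le_sum μ (fun i => {ω | (S i ω).Nonempty}) hS _

theorem stmt_1_general
    (m : ℕ → ℕ)
    (Q : ℕ → ℝ) (Qn : ℕ → ℕ → ℝ)
    (hconv : ∀ t, Tendsto (fun n => Qn n t) atTop (nhds (Q t)))
    (hQ0 : Q 0 = 1)
    (Ω : ℕ → Type) (mΩ : ∀ n, MeasurableSpace (Ω n))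
    (P : ∀ n, Measure (Ω n)) (hP : ∀ n, IsProbabilityMeasure (P n))
    (S : ∀ n, Fin n → Ω n → Finset (Fin (m n)))
    (hSmeas : ∀ n (i : Fin n) (A : Finset (Fin (m n))),
      MeasurableSet {ω | S n i ω = A})
    (hdist : ∀ n (i : Fin n) (A : Finset (Fin (m n))),
      P n {ω | S n i ω = A} = ENNReal.ofReal (Qn n A.card / (m n).choose A.card)) :
    ∀ ε : ℝ, 0 < ε →
      Tendsto (fun n =>
          P n {ω | ε * n ≤ (largestComponentOrder (interGraph (fun i => S n i ω)) : ℝ)})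
        atTop (nhds 0) := by
  intro ε hε
  have hcompl : ∀ n i, {ω | (S n i ω).Nonempty} = {ω | S n i ω = ∅}ᶜ := fun n i => by
    ext ω
    simp [Finset.nonempty_iff_ne_empty]
  have hnonempty : ∀ n i, P n {ω | (S n i ω).Nonempty} = 1 - ENNReal.ofReal (Qn n 0) :=
    fun n i => by
      rw [hcompl, prob_compl_eq_one_sub (hSmeas n i ∅), hdist]
      simp
  have hbound : ∀ᶠ n : ℕ in atTop,
      P n {ω | ε * n ≤ (largestComponentOrder (interGraph (fun i => S n i ω)) : ℝ)} ≤
        (1 - ENNReal.ofReal (Qn n 0)) / ENNReal.ofReal ε := by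
    filter_upwards [(tendsto_natCast_atTop_atTop.const_mul_atTop hε).eventually_gt_atTop 1]
      with n hn
    have hmarkov := mul_measure_largestComponentOrder_ge_le_sum (P n) (S n)
      (fun i => hcompl n i ▸ (hSmeas n i ∅).compl) hn
    rw [Finset.sum_congr rfl fun i _ => hnonempty n i, Finset.sum_const, Finset.card_univ,
      Fintype.card_fin, nsmul_eq_mul, ENNReal.ofReal_mul hε.le, ENNReal.ofReal_natCast,
      mul_comm (ENNReal.ofReal ε), mul_assoc] at hmarkov
    have hn0 : (n : ℝ≥0∞) ≠ 0 := Nat.cast_ne_zero.2 (by rintro rfl; norm_num at hn)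
    rw [ENNReal.le_div_iff_mul_le (Or.inl (ENNReal.ofReal_pos.2 hε).ne')
      (Or.inl ENNReal.ofReal_ne_top), mul_comm]
    exact (ENNReal.mul_le_mul_iff_right hn0 (ENNReal.natCast_ne_top n)).1 hmarkov
  have hlim : Tendsto (fun n => (1 - ENNReal.ofReal (Qn n 0)) / ENNReal.ofReal ε) atTop
      (nhds 0) := by
    have hempty : Tendsto (fun n => 1 - ENNReal.ofReal (Qn n 0)) atTop (nhds 0) := by
      simpa [hQ0] using ENNReal.Tendsto.sub tendsto_const_nhds
        (ENNReal.tendsto_ofReal (hconv 0)) (Or.inl ENNReal.one_ne_top)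
    simpa using ENNReal.Tendsto.div_const hempty (Or.inr (ENNReal.ofReal_pos.2 hε).ne')
  exact tendsto_of_tendsto_of_tendsto_of_le_of_le' tendsto_const_nhds hlim
    (Eventually.of_forall fun _ => zero_le) hbound

/-- (Bloznelis 2010, Theorem 1, degenerate case `Q(0) = 1`): under the standing
assumptions `mₙ/n → β > 0`, `Qₙ(t) → Q(t)` with convergence of first moments, if
`Q(0) = 1` then the order of the largest component of `G(n, mₙ, Qₙ)` is `o_P(n)`:
for every `ε > 0`, `P(N₁(G(n, mₙ, Qₙ)) ≥ εn) → 0`. -/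
theorem stmt_1
    (β : ℝ) (hβ : 0 < β)
    (m : ℕ → ℕ) (hmpos : ∀ n, 0 < m n)
    (hm : Tendsto (fun n => (m n : ℝ) / n) atTop (nhds β))
    (Q : ℕ → ℝ) (Qn : ℕ → ℕ → ℝ)
    (hQnonneg : ∀ t, 0 ≤ Q t) (hQsum : ∑' t, Q t = 1)
    (hQnnonneg : ∀ n t, 0 ≤ Qn n t) (hQnsum : ∀ n, ∑' t, Qn n t = 1)
    (hQnsupp : ∀ n t, m n < t → Qn n t = 0)
    (hconv : ∀ t, Tendsto (fun n => Qn n t) atTop (nhds (Q t)))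
    (hmomQ : Summable fun t : ℕ => (t : ℝ) * Q t)
    (hmom : Tendsto (fun n => ∑' t : ℕ, (t : ℝ) * Qn n t) atTop
      (nhds (∑' t : ℕ, (t : ℝ) * Q t)))
    (hQ0 : Q 0 = 1)
    (Ω : ℕ → Type) (mΩ : ∀ n, MeasurableSpace (Ω n))
    (P : ∀ n, Measure (Ω n)) (hP : ∀ n, IsProbabilityMeasure (P n))
    (S : ∀ n, Fin n → Ω n → Finset (Fin (m n)))
    (hSmeas : ∀ n (i : Fin n) (A : Finset (Fin (m n))),
      MeasurableSet {ω | S n i ω = A})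
    (hdist : ∀ n (i : Fin n) (A : Finset (Fin (m n))),
      P n {ω | S n i ω = A} = ENNReal.ofReal (Qn n A.card / (m n).choose A.card))
    (hindep : ∀ n (A : Fin n → Finset (Fin (m n))),
      P n {ω | ∀ i, S n i ω = A i} = ∏ i, P n {ω | S n i ω = A i}) :
    ∀ ε : ℝ, 0 < ε →
      Tendsto (fun n =>
          P n {ω | ε * n ≤ (largestComponentOrder (interGraph (fun i => S n i ω)) : ℝ)})
        atTop (nhds 0) :=
  stmt_1_general m Q Qn hconv hQ0 Ω mΩ P hP S hSmeas hdist
end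

section
/- Let k ≥ 4 and let a, b be nonnegative integers with a + b ≤ k. Let W' be a set of size k, let B ⊆ W' have size b, and let A be a uniformly random subset of W' of size a. Then P(|A ∩ B| ≥ 2) ≤ (1/2)·(a b / k)². -/
/-!
Every `a`-set `A` with `|A ∩ B| ≥ 2` contains one of the `C(b, 2)` pairs of `B`, and each pair lies
in exactly `C(k - 2, a - 2)` of the `a`-sets. Since `C(k, a) C(a, 2) = C(k, 2) C(k - 2, a - 2)`, the
union bound gives `P(|A ∩ B| ≥ 2) ≤ C(a, 2) C(b, 2) / C(k, 2)`, and
`C(a, 2) C(b, 2) / C(k, 2) ≤ (ab/k)² / 2` reduces to `k (a - 1)(b - 1) ≤ (k - 1) ab`, which holds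
as soon as `b ≤ k`.
-/

open Finset

namespace Finset

variable {α : Type*} [DecidableEq α] {s t : Finset α}

theorem card_powersetCard_filter_le_card_inter_le (ht : t ⊆ s) {m n : ℕ} (hmn : m ≤ n) :
    #{A ∈ s.powersetCard n | m ≤ #(A ∩ t)} ≤ (#t).choose m * (#s - m).choose (n - m) := by
  have hcover : {A ∈ s.powersetCard n | m ≤ #(A ∩ t)} ⊆
      (t.powersetCard m).biUnion fun P => {A ∈ s.powersetCard n | P ⊆ A} := by
    intro A hA
    rw [mem_filter] at hA
    obtain ⟨P, hPA, hPm⟩ := exists_subset_card_eq hA.2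
    simp only [mem_biUnion, mem_powersetCard, mem_filter]
    exact ⟨P, ⟨hPA.trans inter_subset_right, hPm⟩, mem_powersetCard.mp hA.1,
      hPA.trans inter_subset_left⟩
  have hpair : ∀ P ∈ t.powersetCard m,
      #{A ∈ s.powersetCard n | P ⊆ A} = (#s - m).choose (n - m) := by
    intro P hP
    obtain ⟨hPt, hPm⟩ := mem_powersetCard.mp hP
    rw [← hPm]
    exact card_filter_powersetCard_subset P s n (hPt.trans ht) (hPm ▸ hmn)
  calc #{A ∈ s.powersetCard n | m ≤ #(A ∩ t)}
      ≤ ∑ P ∈ t.powersetCard m, #{A ∈ s.powersetCard n | P ⊆ A} :=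
        (card_le_card hcover).trans card_biUnion_le
    _ = (#t).choose m * (#s - m).choose (n - m) := by
        rw [sum_congr rfl hpair, sum_const, card_powersetCard, smul_eq_mul]

theorem card_powersetCard_filter_le_card_inter_div_le (ht : t ⊆ s) (m n : ℕ) :
    (#{A ∈ s.powersetCard n | m ≤ #(A ∩ t)} : ℝ) / (#s).choose n ≤
      n.choose m * (#t).choose m / (#s).choose m := by
  obtain hempty | ⟨A, hA⟩ := eq_empty_or_nonempty {A ∈ s.powersetCard n | m ≤ #(A ∩ t)}
  · rw [hempty, card_empty, Nat.cast_zero, zero_div]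
    positivity
  obtain ⟨⟨hAs, hAn⟩, hmA⟩ := mem_filter.mp hA |>.imp_left mem_powersetCard.mp
  have hmn : m ≤ n := hAn ▸ hmA.trans (card_le_card inter_subset_left)
  have hns : n ≤ #s := hAn ▸ card_le_card hAs
  have hbound := card_powersetCard_filter_le_card_inter_le ht hmn
  have hchoose : (#s).choose n * n.choose m = (#s).choose m * (#s - m).choose (n - m) :=
    Nat.choose_mul hmn
  rw [div_le_div_iff₀ (by exact_mod_cast Nat.choose_pos hns)
    (by exact_mod_cast Nat.choose_pos (hmn.trans hns))]
  exact_mod_cast calc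
    #{A ∈ s.powersetCard n | m ≤ #(A ∩ t)} * (#s).choose m
        ≤ (#t).choose m * (#s - m).choose (n - m) * (#s).choose m :=
          Nat.mul_le_mul_right _ hbound
    _ = n.choose m * (#t).choose m * (#s).choose n := by
          rw [mul_assoc, mul_comm _ ((#s).choose m), ← hchoose]; ring

end Finset

theorem choose_two_mul_choose_two_div_choose_two_le {a b k : ℕ} (hbk : b ≤ k) :
    (a.choose 2 * b.choose 2 : ℝ) / k.choose 2 ≤ (1 / 2 : ℝ) * (a * b / k) ^ 2 := by
  rcases Nat.lt_or_ge b 2 with hb | hb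
  · rw [Nat.choose_eq_zero_of_lt hb, Nat.cast_zero, mul_zero, zero_div]
    positivity
  have hb : (2 : ℝ) ≤ b := by exact_mod_cast hb
  have hbk : (b : ℝ) ≤ k := by exact_mod_cast hbk
  have ha : (0 : ℝ) ≤ a := a.cast_nonneg
  have hkey : (k : ℝ) * (a - 1) * (b - 1) ≤ (k - 1) * a * b := by
    nlinarith [mul_nonneg ha (sub_nonneg.2 hbk)]
  have hk : (k : ℝ) ≠ 0 := (by linarith : (0 : ℝ) < k).ne'
  rw [Nat.cast_choose_two, Nat.cast_choose_two, Nat.cast_choose_two,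
    div_le_iff₀ (by nlinarith)]
  field_simp
  nlinarith [mul_le_mul_of_nonneg_left hkey (by positivity : (0 : ℝ) ≤ a * b)]

theorem stmt_4_general {α : Type*} [DecidableEq α] (k a b : ℕ)
    (W' B : Finset α) (hW : W'.card = k) (hBW : B ⊆ W') (hB : B.card = b) :
    (((W'.powersetCard a).filter (fun A => 2 ≤ (A ∩ B).card)).card : ℝ) / (k.choose a) ≤
      (1 / 2 : ℝ) * (a * b / k) ^ 2 := by
  have hbk : b ≤ k := hW ▸ hB ▸ card_le_card hBW
  calc (((W'.powersetCard a).filter (fun A => 2 ≤ (A ∩ B).card)).card : ℝ) / (k.choose a)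
      ≤ a.choose 2 * b.choose 2 / k.choose 2 := by
        simpa only [hW, hB] using card_powersetCard_filter_le_card_inter_div_le hBW 2 a
    _ ≤ (1 / 2 : ℝ) * (a * b / k) ^ 2 := choose_two_mul_choose_two_div_choose_two_le hbk

/-- **Lemma 1, inequality (6)** (Bloznelis 2010): for a uniformly random `a`-element
subset `A` of a `k`-element set `W'` and a fixed `b`-element subset `B ⊆ W'` with
`a + b ≤ k` and `k ≥ 4`, `P(|A ∩ B| ≥ 2) ≤ (ab/k)²/2`. -/
theorem stmt_4 {α : Type*} [DecidableEq α] (k a b : ℕ) (hk : 4 ≤ k)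
    (hab : a + b ≤ k)
    (W' B : Finset α) (hW : W'.card = k) (hBW : B ⊆ W') (hB : B.card = b) :
    (((W'.powersetCard a).filter (fun A => 2 ≤ (A ∩ B).card)).card : ℝ) / (k.choose a) ≤
      (1 / 2 : ℝ) * (a * b / k) ^ 2 :=
  stmt_4_general k a b W' B hW hBW hB
end

section
/- Let k ≥ 4 and let a ≥ 1, b ≥ 1, h ≥ 0 be integers with a + b + h ≤ k. Let W' be a set of size k, let B, H ⊆ W' be disjoint with |B| = b, |H| = h, and let A be a uniformly random subset of W' of size a. Write κ = a b / k, κ' = a b / (k − a) and κ'' = (a − 1) h / (k − b). Then κ(1 − κ' − κ'') ≤ P(|A ∩ B| = 1 and A ∩ H = ∅) ≤ κ. -/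
-- union bound lemma
lemma aux_choose (t : ℕ) : ∀ (m s : ℕ), m.choose (s+1) ≤ (m - t).choose (s+1) + t * (m-1).choose s := by
  induction t with
  | zero => intro m s; simp
  | succ t ih =>
    intro m s
    have pascal : m.choose (s+1) ≤ (m-1).choose (s+1) + (m-1).choose s := by
      cases m with
      | zero => simp
      | succ n => simp [Nat.choose_succ_succ, Nat.add_comm]
    calc m.choose (s+1) ≤ (m-1).choose (s+1) + (m-1).choose s := pascal
      _ ≤ (m - 1 - t).choose (s+1) + t * ((m-1)-1).choose s + (m-1).choose s := by
          have := ih (m-1) s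
          omega
      _ ≤ (m - (t+1)).choose (s+1) + (t+1) * (m-1).choose s := by
          have h1 : ((m-1)-1).choose s ≤ (m-1).choose s :=
            Nat.choose_le_choose s (by omega)
          have h2 : m - 1 - t = m - (t+1) := by omega
          rw [h2]
          nlinarith

-- counting lemma
lemma aux_count {α : Type*} [DecidableEq α] (k a b h : ℕ)
    (ha : 1 ≤ a)
    (W' B H : Finset α) (hW : W'.card = k) (hBW : B ⊆ W') (hHW : H ⊆ W')
    (hdisj : Disjoint B H) (hB : B.card = b) (hH : H.card = h) :
    ((W'.powersetCard a).filter
        (fun A => (A ∩ B).card = 1 ∧ A ∩ H = ∅)).card = b * ((k - b - h).choose (a-1)) := by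
  classical
  have hBHW : B ∪ H ⊆ W' := Finset.union_subset hBW hHW
  have hcardU : (B ∪ H).card = b + h := by
    rw [Finset.card_union_of_disjoint hdisj, hB, hH]
  have hcardS : (W' \ (B ∪ H)).card = k - b - h := by
    rw [Finset.card_sdiff_of_subset hBHW, hW, hcardU, Nat.sub_sub]
  have key : (B ×ˢ (W' \ (B ∪ H)).powersetCard (a-1)).card =
      ((W'.powersetCard a).filter
        (fun A => (A ∩ B).card = 1 ∧ A ∩ H = ∅)).card := by
    apply Finset.card_bij (fun p _ => insert p.1 p.2)
    · rintro ⟨x, S⟩ hp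
      rw [Finset.mem_product] at hp
      obtain ⟨hx, hS⟩ := hp
      rw [Finset.mem_powersetCard] at hS
      obtain ⟨hS1, hS2⟩ := hS
      have hxS : x ∉ S := by
        intro hxS
        have := hS1 hxS
        simp [Finset.mem_sdiff, Finset.mem_union] at this
        exact this.2.1 hx
      simp only [Finset.mem_filter, Finset.mem_powersetCard]
      refine ⟨⟨?_, ?_⟩, ?_, ?_⟩
      · exact Finset.insert_subset (hBW hx) (hS1.trans (Finset.sdiff_subset))
      · rw [Finset.card_insert_of_notMem hxS, hS2]; omega
      · have : insert x S ∩ B = {x} := by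
          ext y
          simp only [Finset.mem_inter, Finset.mem_insert, Finset.mem_singleton]
          constructor
          · rintro ⟨(rfl | hyS), hyB⟩
            · rfl
            · exact absurd (hS1 hyS) (by simp [Finset.mem_sdiff, Finset.mem_union, hyB])
          · rintro rfl; exact ⟨Or.inl rfl, hx⟩
        rw [this]; simp
      · ext y
        simp only [Finset.mem_inter, Finset.mem_insert, Finset.notMem_empty, iff_false]
        rintro ⟨(rfl | hyS), hyH⟩
        · exact (Finset.disjoint_left.mp hdisj hx) hyH
        · exact absurd (hS1 hyS) (by simp [Finset.mem_sdiff, Finset.mem_union, hyH])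
    · rintro ⟨x, S⟩ hp ⟨x', S'⟩ hp' heq
      rw [Finset.mem_product, Finset.mem_powersetCard] at hp hp'
      have hxS : x ∉ S := fun hm => by
        have := hp.2.1 hm; simp [Finset.mem_sdiff, Finset.mem_union] at this; exact this.2.1 hp.1
      have hxS' : x' ∉ S' := fun hm => by
        have := hp'.2.1 hm; simp [Finset.mem_sdiff, Finset.mem_union] at this; exact this.2.1 hp'.1
      have hx'B : x' ∈ B := hp'.1
      have hxB : x ∈ B := hp.1
      have hxx : x = x' := by
        have hx'mem : x' ∈ insert x S := heq ▸ Finset.mem_insert_self x' S'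
        rcases Finset.mem_insert.mp hx'mem with h1 | h1
        · exact h1.symm
        · exact absurd (hp.2.1 h1) (by simp [Finset.mem_sdiff, Finset.mem_union, hx'B])
      subst hxx
      have : S = S' := by
        apply Finset.ext
        intro y
        constructor
        · intro hy
          have : y ∈ insert x S' := heq ▸ Finset.mem_insert_of_mem hy
          rcases Finset.mem_insert.mp this with rfl | h1
          · exact absurd hy hxS
          · exact h1
        · intro hy
          have : y ∈ insert x S := heq.symm ▸ Finset.mem_insert_of_mem hy
          rcases Finset.mem_insert.mp this with rfl | h1
          · exact absurd hy hxS'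
          · exact h1
      simp [this]
    · intro A hA
      rw [Finset.mem_filter, Finset.mem_powersetCard] at hA
      obtain ⟨⟨hAW, hAcard⟩, hAB, hAH⟩ := hA
      obtain ⟨x, hx⟩ := Finset.card_eq_one.mp hAB
      have hxA : x ∈ A := (Finset.mem_inter.mp (hx ▸ Finset.mem_singleton_self x)).1
      have hxB : x ∈ B := (Finset.mem_inter.mp (hx ▸ Finset.mem_singleton_self x)).2
      refine ⟨⟨x, A \ B⟩, ?_, ?_⟩
      · rw [Finset.mem_product, Finset.mem_powersetCard]
        refine ⟨hxB, ?_, ?_⟩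
        · intro y hy
          rw [Finset.mem_sdiff] at hy ⊢
          refine ⟨hAW hy.1, ?_⟩
          rw [Finset.mem_union]
          rintro (h1 | h1)
          · exact hy.2 h1
          · exact absurd (Finset.mem_inter.mpr ⟨hy.1, h1⟩) (by simp [hAH])
        · have : A \ B = A \ {x} := by
            rw [← hx, Finset.sdiff_inter_self_left]
          rw [this, Finset.card_sdiff_of_subset (by simpa using hxA), hAcard]
          simp
      · have : A \ B = A.erase x := by
          ext y
          simp only [Finset.mem_sdiff, Finset.mem_erase]
          constructor
          · rintro ⟨h1, h2⟩; exact ⟨fun hxy => h2 (hxy ▸ hxB), h1⟩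
          · rintro ⟨h1, h2⟩
            refine ⟨h2, fun hyB => h1 ?_⟩
            have : y ∈ A ∩ B := Finset.mem_inter.mpr ⟨h2, hyB⟩
            rw [hx, Finset.mem_singleton] at this
            exact this
        rw [this, Finset.insert_erase hxA]
  rw [← key, Finset.card_product, Finset.card_powersetCard, hcardS, hB]

set_option maxHeartbeats 1000000 in
/-- **Lemma 1, inequality (7)** (Bloznelis 2010): for a uniformly random `a`-element
subset `A` of a `k`-element set `W'` and fixed disjoint subsets `B, H ⊆ W'` with
`|B| = b`, `|H| = h`, `a + b + h ≤ k` and `k ≥ 4`, writing `κ = ab/k`,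
`κ' = ab/(k-a)` and `κ'' = (a-1)h/(k-b)`,
`κ(1 - κ' - κ'') ≤ P(|A ∩ B| = 1, A ∩ H = ∅) ≤ κ`. -/
theorem stmt_5 {α : Type*} [DecidableEq α] (k a b h : ℕ) (hk : 4 ≤ k)
    (ha : 1 ≤ a) (hb : 1 ≤ b) (habh : a + b + h ≤ k)
    (W' B H : Finset α) (hW : W'.card = k) (hBW : B ⊆ W') (hHW : H ⊆ W')
    (hdisj : Disjoint B H) (hB : B.card = b) (hH : H.card = h) :
    (a * b / k : ℝ) *
        (1 - a * b / ((k : ℝ) - a) - ((a : ℝ) - 1) * h / ((k : ℝ) - b)) ≤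
      (((W'.powersetCard a).filter
          (fun A => (A ∩ B).card = 1 ∧ A ∩ H = ∅)).card : ℝ) / (k.choose a) ∧
    (((W'.powersetCard a).filter
        (fun A => (A ∩ B).card = 1 ∧ A ∩ H = ∅)).card : ℝ) / (k.choose a) ≤
      (a * b / k : ℝ) := by
  classical
  have hcount := aux_count k a b h ha W' B H hW hBW hHW hdisj hB hH
  rw [hcount]
  have hcast : ((b * (k - b - h).choose (a - 1) : ℕ) : ℝ)
      = (b:ℝ) * ((k - b - h).choose (a-1) : ℝ) := by push_cast; ring
  rw [hcast]
  set C0 : ℝ := ((k - b - h).choose (a-1) : ℝ) with hC0def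
  set C1 : ℝ := ((k-1).choose (a-1) : ℝ) with hC1def
  set N : ℝ := (k.choose a : ℝ) with hNdef
  have hak : a ≤ k := by omega
  have hNpos : (0:ℝ) < N := by
    have := Nat.choose_pos hak
    rw [hNdef]; exact_mod_cast this
  have hkpos : (0:ℝ) < k := by positivity
  have hC0nn : (0:ℝ) ≤ C0 := by rw [hC0def]; positivity
  have hC1nn : (0:ℝ) ≤ C1 := by rw [hC1def]; positivity
  have hbnn : (0:ℝ) ≤ b := by positivity
  have hid1n : k * (k-1).choose (a-1) = k.choose a * a := by
    have h1 := Nat.add_one_mul_choose_eq (k-1) (a-1)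
    have e1 : k - 1 + 1 = k := by omega
    have e2 : a - 1 + 1 = a := by omega
    simp only [Nat.succ_eq_add_one, e1, e2] at h1
    exact h1
  have hid1 : (k:ℝ) * C1 = N * a := by
    rw [hC1def, hNdef]; exact_mod_cast hid1n
  have hC0C1 : C0 ≤ C1 := by
    have h1 : (k-b-h).choose (a-1) ≤ (k-1).choose (a-1) :=
      Nat.choose_le_choose _ (by omega)
    rw [hC0def, hC1def]; exact_mod_cast h1
  constructor
  · -- lower bound
    by_cases ha2 : 2 ≤ a
    · set D : ℝ := ((k-2).choose (a-2) : ℝ) with hDdef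
      set E : ℝ := ((k-b-1).choose (a-2) : ℝ) with hEdef
      have hDnn : (0:ℝ) ≤ D := by rw [hDdef]; positivity
      have hEnn : (0:ℝ) ≤ E := by rw [hEdef]; positivity
      have hid2n : (k-1) * (k-2).choose (a-2) = (k-1).choose (a-1) * (a-1) := by
        have h1 := Nat.add_one_mul_choose_eq (k-2) (a-2)
        have e1 : k - 2 + 1 = k - 1 := by omega
        have e2 : a - 2 + 1 = a - 1 := by omega
        simp only [Nat.succ_eq_add_one, e1, e2] at h1
        exact h1
      have hid2 : ((k:ℝ)-1) * D = C1 * ((a:ℝ)-1) := by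
        have h2 : (((k-1:ℕ)):ℝ) * (((k-2).choose (a-2) : ℕ):ℝ)
            = (((k-1).choose (a-1) : ℕ):ℝ) * (((a-1:ℕ)):ℝ) := by exact_mod_cast hid2n
        rw [Nat.cast_sub (by omega : 1 ≤ k), Nat.cast_sub (by omega : 1 ≤ a)] at h2
        rw [hDdef, hC1def]
        push_cast at h2 ⊢
        linarith [h2]
      have hED : E ≤ D := by
        have h1 : (k-b-1).choose (a-2) ≤ (k-2).choose (a-2) :=
          Nat.choose_le_choose _ (by omega)
        rw [hDdef, hEdef]; exact_mod_cast h1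
      have n1 : (k-1).choose (a-1) ≤ (k-b).choose (a-1) + (b-1) * (k-2).choose (a-2) := by
        have h1 := aux_choose (b-1) (k-1) (a-2)
        have e0 : a - 2 + 1 = a - 1 := by omega
        have e1 : k - 1 - (b-1) = k - b := by omega
        have e2 : k - 1 - 1 = k - 2 := by omega
        rwa [e0, e1, e2] at h1
      have n2 : (k-b).choose (a-1) ≤ (k-b-h).choose (a-1) + h * (k-b-1).choose (a-2) := by
        have h1 := aux_choose h (k-b) (a-2)
        have e0 : a - 2 + 1 = a - 1 := by omega
        rwa [e0] at h1
      have hkey : C1 ≤ C0 + ((b:ℝ)-1) * D + (h:ℝ) * E := by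
        have h1 : (((k-1).choose (a-1) : ℕ):ℝ) ≤ (((k-b).choose (a-1) : ℕ):ℝ)
            + (((b-1:ℕ)):ℝ) * (((k-2).choose (a-2) : ℕ):ℝ) := by exact_mod_cast n1
        have h2 : (((k-b).choose (a-1) : ℕ):ℝ) ≤ (((k-b-h).choose (a-1) : ℕ):ℝ)
            + (h:ℝ) * (((k-b-1).choose (a-2) : ℕ):ℝ) := by exact_mod_cast n2
        rw [Nat.cast_sub (by omega : 1 ≤ b)] at h1
        rw [hC0def, hC1def, hDdef, hEdef]
        push_cast at h1 h2 ⊢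
        linarith
      have hka : (0:ℝ) < (k:ℝ) - a := by
        have h1 : a + 1 ≤ k := by omega
        have h2 : (a:ℝ) + 1 ≤ k := by exact_mod_cast h1
        linarith
      have hkb : (0:ℝ) < (k:ℝ) - b := by
        have h1 : b + 1 ≤ k := by omega
        have h2 : (b:ℝ) + 1 ≤ k := by exact_mod_cast h1
        linarith
      have ha1r : (1:ℝ) ≤ a := by exact_mod_cast ha
      have hb1r : (1:ℝ) ≤ b := by exact_mod_cast hb
      have hhnn : (0:ℝ) ≤ h := by positivity
      have step1 : ((b:ℝ)-1) * D ≤ (a:ℝ) * b / ((k:ℝ) - a) * C1 := by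
        rw [div_mul_eq_mul_div, le_div_iff₀ hka]
        calc ((b:ℝ)-1) * D * ((k:ℝ) - a)
            ≤ ((b:ℝ)-1) * D * ((k:ℝ) - 1) := by
              apply mul_le_mul_of_nonneg_left (by linarith)
                (mul_nonneg (by linarith) hDnn)
          _ = ((b:ℝ)-1) * (C1 * ((a:ℝ)-1)) := by rw [← hid2]; ring
          _ ≤ (a:ℝ) * b * C1 := by
              nlinarith [mul_nonneg hC1nn (show (0:ℝ) ≤ (a:ℝ) + b - 1 by linarith)]
      have step2 : (h:ℝ) * E ≤ ((a:ℝ)-1) * h / ((k:ℝ) - b) * C1 := by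
        rw [div_mul_eq_mul_div, le_div_iff₀ hkb]
        calc (h:ℝ) * E * ((k:ℝ) - b)
            ≤ (h:ℝ) * D * ((k:ℝ) - b) := by
              apply mul_le_mul_of_nonneg_right
                (mul_le_mul_of_nonneg_left hED hhnn) (by linarith)
          _ ≤ (h:ℝ) * D * ((k:ℝ) - 1) := by
              apply mul_le_mul_of_nonneg_left (by linarith) (mul_nonneg hhnn hDnn)
          _ = (h:ℝ) * (C1 * ((a:ℝ)-1)) := by rw [← hid2]; ring
          _ = ((a:ℝ)-1) * h * C1 := by ring
      have step3 : C1 * (1 - (a:ℝ) * b / ((k:ℝ) - a) - ((a:ℝ) - 1) * h / ((k:ℝ) - b)) ≤ C0 := by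
        have expand : C1 * (1 - (a:ℝ) * b / ((k:ℝ) - a) - ((a:ℝ) - 1) * h / ((k:ℝ) - b))
            = C1 - ((a:ℝ) * b / ((k:ℝ) - a) * C1) - (((a:ℝ)-1) * h / ((k:ℝ) - b) * C1) := by
          ring
        rw [expand]
        linarith
      rw [div_mul_eq_mul_div, div_le_div_iff₀ hkpos hNpos]
      have e : (a:ℝ) * b * (1 - (a:ℝ) * b / ((k:ℝ) - a) - ((a:ℝ) - 1) * h / ((k:ℝ) - b)) * N
          = (b:ℝ) * k * (C1 * (1 - (a:ℝ) * b / ((k:ℝ) - a) - ((a:ℝ) - 1) * h / ((k:ℝ) - b))) := by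
        linear_combination ((b:ℝ) * (1 - (a:ℝ) * b / ((k:ℝ) - a)
          - ((a:ℝ) - 1) * h / ((k:ℝ) - b))) * hid1.symm
      rw [e]
      have hlast := mul_le_mul_of_nonneg_left step3 (by positivity : (0:ℝ) ≤ (b:ℝ) * k)
      linarith [hlast]
    · -- a = 1
      have ha1 : a = 1 := by omega
      subst ha1
      have hC0 : C0 = 1 := by rw [hC0def]; norm_num
      have hN : N = k := by rw [hNdef, Nat.choose_one_right]
      rw [hC0, hN]
      have hkr : (4:ℝ) ≤ k := by exact_mod_cast hk
      have hka : (0:ℝ) < (k:ℝ) - 1 := by push_cast; linarith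
      have hbk : (0:ℝ) ≤ (b:ℝ) / ((k:ℝ) - 1) := by positivity
      have hbk2 : (0:ℝ) ≤ (b:ℝ) / (k:ℝ) := by positivity
      push_cast
      have e : ((1:ℝ) - 1) * h / ((k:ℝ) - b) = 0 := by ring
      rw [e]
      have e1 : 1 * (b:ℝ) / k * (1 - 1 * (b:ℝ) / ((k:ℝ)-1) - 0)
          = (b:ℝ) / k * (1 - (b:ℝ) / ((k:ℝ)-1)) := by ring
      have e2 : (b:ℝ) * 1 / k = (b:ℝ) / k := by ring
      rw [e1, e2]
      nlinarith [mul_nonneg hbk2 hbk]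
  · -- upper bound
    rw [div_le_div_iff₀ hNpos hkpos]
    nlinarith [mul_le_mul_of_nonneg_left hC0C1 (by positivity : (0:ℝ) ≤ (b:ℝ) * k), hid1, hbnn, hC0nn]
end

section
/- Let k ≥ 4 and let a ≥ 1, b ≥ 1, h ≥ 0 be integers with a + b + h ≤ k. Let W' be a set of size k, let B, H ⊆ W' be disjoint with |B| = b, |H| = h, and let A be a uniformly random subset of W' of size a. Write κ = a b / k and κ'' = (a − 1) h / (k − b). Then P(|A ∩ B| = 1 and A ∩ H ≠ ∅) ≤ κ''·κ. -/
/-!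
A set `A` in the event contains some `x ∈ B` and some `y ∈ H`, so by the union bound the
probability is at most `b h` times the probability that a uniform `a`-subset of a `k`-set
contains two given points, which is `a (a - 1) / (k (k - 1))`. This is at most `κ'' κ`
because `k - b ≤ k - 1`.
-/

open Finset

section

variable {α : Type*} [DecidableEq α]

lemma card_filter_meets_both_le (𝒜 : Finset (Finset α)) (B H : Finset α) :
    #{A ∈ 𝒜 | (A ∩ B).Nonempty ∧ (A ∩ H).Nonempty} ≤
      ∑ p ∈ B ×ˢ H, #{A ∈ 𝒜 | {p.1, p.2} ⊆ A} := by
  refine (card_le_card ?_).trans card_biUnion_le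
  intro A hA
  obtain ⟨hA𝒜, ⟨x, hx⟩, ⟨y, hy⟩⟩ := mem_filter.1 hA
  rw [mem_inter] at hx hy
  exact mem_biUnion.2 ⟨(x, y), mem_product.2 ⟨hx.2, hy.2⟩,
    mem_filter.2 ⟨hA𝒜, insert_subset hx.1 (singleton_subset_iff.2 hy.1)⟩⟩

lemma card_filter_pair_subset_powersetCard_mul_choose_two {s : Finset α} {x y : α}
    (hx : x ∈ s) (hy : y ∈ s) (hxy : x ≠ y) (n : ℕ) :
    #{A ∈ s.powersetCard n | {x, y} ⊆ A} * (#s).choose 2 = (#s).choose n * n.choose 2 := by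
  have hpair : #({x, y} : Finset α) = 2 := card_pair hxy
  rcases lt_or_ge n 2 with hn | hn
  · have hempty : {A ∈ s.powersetCard n | {x, y} ⊆ A} = ∅ := by
      refine filter_eq_empty_iff.2 fun A hA hxyA => ?_
      have := card_le_card hxyA
      rw [hpair, (mem_powersetCard.1 hA).2] at this
      omega
    rw [hempty, Nat.choose_eq_zero_of_lt hn]
    simp
  · rw [card_filter_powersetCard_subset _ _ _ (insert_subset hx (singleton_subset_iff.2 hy))
      (hpair ▸ hn), hpair, Nat.choose_mul hn]
    ring

lemma cast_card_filter_pair_subset_powersetCard {s : Finset α} {x y : α}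
    (hx : x ∈ s) (hy : y ∈ s) (hxy : x ≠ y) (n : ℕ) :
    (#{A ∈ s.powersetCard n | {x, y} ⊆ A} : ℝ) =
      (#s).choose n * (n * (n - 1)) / (#s * (#s - 1)) := by
  have htwo : (2 : ℝ) ≤ #s := by
    exact_mod_cast card_pair hxy ▸ card_le_card (insert_subset hx (singleton_subset_iff.2 hy))
  have key := congrArg (Nat.cast (R := ℝ))
    (card_filter_pair_subset_powersetCard_mul_choose_two hx hy hxy n)
  push_cast [Nat.cast_choose_two] at key
  rw [eq_div_iff (by nlinarith)]
  linarith

end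

lemma mul_div_mul_sub_one_le_div_sub_mul_div {a b k h : ℝ} (ha : 1 ≤ a) (hb : 1 ≤ b)
    (hbk : b < k) (hh : 0 ≤ h) :
    b * h * (a * (a - 1)) / (k * (k - 1)) ≤ (a - 1) * h / (k - b) * (a * b / k) := by
  rw [div_mul_div_comm, show (a - 1) * h * (a * b) = b * h * (a * (a - 1)) by ring]
  have ha1 : 0 ≤ a - 1 := by linarith
  have hk0 : 0 < k := by linarith
  exact div_le_div_of_nonneg_left (by positivity) (by nlinarith) (by nlinarith)

theorem stmt_6_general {α : Type*} [DecidableEq α] (k a b h : ℕ)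
    (ha : 1 ≤ a) (hb : 1 ≤ b) (habh : a + b + h ≤ k)
    (W' B H : Finset α) (hW : W'.card = k) (hBW : B ⊆ W') (hHW : H ⊆ W')
    (hdisj : Disjoint B H) (hB : B.card = b) (hH : H.card = h) :
    (((W'.powersetCard a).filter
        (fun A => (A ∩ B).card = 1 ∧ (A ∩ H).Nonempty)).card : ℝ) / (k.choose a) ≤
      (((a : ℝ) - 1) * h / ((k : ℝ) - b)) * (a * b / k : ℝ) := by
  have hpair : ∀ p ∈ B ×ˢ H, (#{A ∈ W'.powersetCard a | {p.1, p.2} ⊆ A} : ℝ) =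
      k.choose a * (a * (a - 1)) / (k * (k - 1)) := by
    rintro ⟨x, y⟩ hp
    obtain ⟨hx, hy⟩ := mem_product.1 hp
    rw [cast_card_filter_pair_subset_powersetCard (hBW hx) (hHW hy)
      (disjoint_left.1 hdisj hx <| · ▸ hy), hW]
  have hcount : (#{A ∈ W'.powersetCard a | #(A ∩ B) = 1 ∧ (A ∩ H).Nonempty} : ℝ) ≤
      b * h * (a * (a - 1)) / (k * (k - 1)) * k.choose a := by
    calc (#{A ∈ W'.powersetCard a | #(A ∩ B) = 1 ∧ (A ∩ H).Nonempty} : ℝ)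
        ≤ #{A ∈ W'.powersetCard a | (A ∩ B).Nonempty ∧ (A ∩ H).Nonempty} := by
          gcongr with A
          exact fun hAB => card_pos.1 (hAB ▸ one_pos)
      _ ≤ ∑ p ∈ B ×ˢ H, (#{A ∈ W'.powersetCard a | {p.1, p.2} ⊆ A} : ℝ) := by
          exact_mod_cast card_filter_meets_both_le _ B H
      _ = _ := by
          rw [sum_congr rfl hpair, sum_const, card_product, hB, hH, nsmul_eq_mul]
          push_cast
          ring
  have hratio := mul_div_mul_sub_one_le_div_sub_mul_div (b := b) (k := k) (a := a) (h := h)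
    (by exact_mod_cast ha) (by exact_mod_cast hb) (by exact_mod_cast (by omega : b < k))
    h.cast_nonneg
  rw [div_le_iff₀ (by exact_mod_cast Nat.choose_pos (by omega))]
  exact hcount.trans (by gcongr)

/-- **Lemma 1, inequality (8)** (Bloznelis 2010): for a uniformly random `a`-element
subset `A` of a `k`-element set `W'` and fixed disjoint subsets `B, H ⊆ W'` with
`|B| = b`, `|H| = h`, `a + b + h ≤ k` and `k ≥ 4`, writing `κ = ab/k` and
`κ'' = (a-1)h/(k-b)`, `P(|A ∩ B| = 1, A ∩ H ≠ ∅) ≤ κ'' κ`. -/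
theorem stmt_6 {α : Type*} [DecidableEq α] (k a b h : ℕ) (hk : 4 ≤ k)
    (ha : 1 ≤ a) (hb : 1 ≤ b) (habh : a + b + h ≤ k)
    (W' B H : Finset α) (hW : W'.card = k) (hBW : B ⊆ W') (hHW : H ⊆ W')
    (hdisj : Disjoint B H) (hB : B.card = b) (hH : H.card = h) :
    (((W'.powersetCard a).filter
        (fun A => (A ∩ B).card = 1 ∧ (A ∩ H).Nonempty)).card : ℝ) / (k.choose a) ≤
      (((a : ℝ) - 1) * h / ((k : ℝ) - b)) * (a * b / k : ℝ) :=
  stmt_6_general k a b h ha hb habh W' B H hW hBW hHW hdisj hB hH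
end
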